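/- arXiv:2204.09549 — 3 statements merged into one kernel-verified Lean document; each statement's English description precedes it below -/
import Mathlib

section
/- Let k be a real number and y ∈ ℝ³. The free-space Green's function Φ_k(·, y) : ℝ³ \ {y} → ℂ defined by Φ_k(x, y) = exp(i k |x − y|) / (4π |x − y|) satisfies the Helmholtz equation Δ_x Φ_k(x, y) + k² Φ_k(x, y) = 0 at every point x ≠ y. -/
/-- The free-space Green's function of the Helmholtz equation in ℝ³:
`Φ_k(x, y) = exp(i k |x − y|)/(4 π |x − y|)`. -/
noncomputable def PhiK (k : ℝ) (x y : EuclideanSpace ℝ (Fin 3)) : ℂ :=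
  Complex.exp (Complex.I * k * ‖x - y‖) / (4 * Real.pi * ‖x - y‖)

/-- Partial derivative in the `i`-th coordinate direction of a complex-valued
function on ℝ³. -/
noncomputable def pderiv3 (i : Fin 3) (f : EuclideanSpace ℝ (Fin 3) → ℂ)
    (x : EuclideanSpace ℝ (Fin 3)) : ℂ :=
  deriv (fun t : ℝ => f (x + t • EuclideanSpace.single i (1 : ℝ))) 0

/-- The Laplace operator: sum of second partial derivatives. -/
noncomputable def laplacian3 (f : EuclideanSpace ℝ (Fin 3) → ℂ)
    (x : EuclideanSpace ℝ (Fin 3)) : ℂ :=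
  ∑ i : Fin 3, pderiv3 i (pderiv3 i f) x

open Complex Real

noncomputable def Sxy (x y : EuclideanSpace ℝ (Fin 3)) (i : Fin 3) : ℝ :=
  (∑ j, (x j - y j)^2) - (x i - y i)^2

lemma Sxy_nonneg (x y : EuclideanSpace ℝ (Fin 3)) (i : Fin 3) : 0 ≤ Sxy x y i := by
  unfold Sxy
  fin_cases i <;> simp [Fin.sum_univ_three] <;>
    nlinarith [sq_nonneg (x 0 - y 0), sq_nonneg (x 1 - y 1), sq_nonneg (x 2 - y 2)]

lemma norm_line (x y : EuclideanSpace ℝ (Fin 3)) (i : Fin 3) (t : ℝ) :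
    ‖x + t • EuclideanSpace.single i (1:ℝ) - y‖
      = Real.sqrt ((x i - y i + t)^2 + Sxy x y i) := by
  rw [EuclideanSpace.norm_eq]
  congr 1
  unfold Sxy
  simp only [PiLp.add_apply, PiLp.sub_apply, PiLp.smul_apply, EuclideanSpace.single_apply,
    smul_eq_mul, Real.norm_eq_abs, sq_abs, Fin.sum_univ_three]
  fin_cases i <;> simp <;> ring

lemma hasDeriv_g (k c S : ℝ) (hrpos : 0 < c^2 + S) :
    HasDerivAt (fun t : ℝ => Complex.exp (Complex.I * k * Real.sqrt ((c+t)^2+S)) /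
        (4 * Real.pi * Real.sqrt ((c+t)^2+S)))
      (Complex.exp (Complex.I * k * Real.sqrt (c^2+S)) *
        (Complex.I * k * Real.sqrt (c^2+S) - 1) * c / (4 * Real.pi * Real.sqrt (c^2+S)^3))
      0 := by
  set r := Real.sqrt (c^2+S) with hrdef
  have hr : 0 < r := Real.sqrt_pos.2 hrpos
  have hq : HasDerivAt (fun t : ℝ => (c+t)^2 + S) (2*c) 0 := by
    have := (((hasDerivAt_id (0:ℝ)).const_add c).pow 2).add_const S
    simpa using this
  have hN : HasDerivAt (fun t : ℝ => Real.sqrt ((c+t)^2+S)) (c / r) 0 := by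
    have h2 := hq.sqrt (by simpa using hrpos.ne')
    simp only [add_zero] at h2
    convert h2 using 1
    rw [hrdef]
    field_simp
  have hNC : HasDerivAt (fun t : ℝ => ((Real.sqrt ((c+t)^2+S) : ℝ) : ℂ)) ((c/r : ℝ) : ℂ) 0 :=
    hN.ofReal_comp
  have hexp : HasDerivAt (fun t : ℝ => Complex.exp (Complex.I * k * (Real.sqrt ((c+t)^2+S) : ℝ)))
      (Complex.exp (Complex.I * k * r) * (Complex.I * k * ((c/r : ℝ) : ℂ))) 0 := by
    have := (hNC.const_mul (Complex.I * (k:ℂ))).cexp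
    simpa [mul_assoc] using this
  have hden : HasDerivAt (fun t : ℝ => (4 * (Real.pi:ℂ)) * ((Real.sqrt ((c+t)^2+S) : ℝ) : ℂ))
      ((4 * (Real.pi:ℂ)) * ((c/r : ℝ) : ℂ)) 0 := hNC.const_mul _
  have hden0 : (4 * (Real.pi:ℂ)) * ((r : ℝ) : ℂ) ≠ 0 := by
    have : (r:ℂ) ≠ 0 := Complex.ofReal_ne_zero.2 hr.ne'
    have hpi : (Real.pi:ℂ) ≠ 0 := Complex.ofReal_ne_zero.2 Real.pi_ne_zero
    exact mul_ne_zero (mul_ne_zero (by norm_num) hpi) this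
  have hdiv := hexp.div hden (by simpa using hden0)
  simp only [add_zero] at hdiv
  have hrc : ((r:ℝ):ℂ) ≠ 0 := Complex.ofReal_ne_zero.2 hr.ne'
  have hpic : ((Real.pi:ℝ):ℂ) ≠ 0 := Complex.ofReal_ne_zero.2 Real.pi_ne_zero
  refine hdiv.congr_deriv ?_
  rw [← hrdef]
  push_cast
  field_simp

lemma hasDeriv_gd (k c S : ℝ) (hrpos : 0 < c^2 + S) :
    HasDerivAt (fun t : ℝ => Complex.exp (Complex.I * k * Real.sqrt ((c+t)^2+S)) *
        (Complex.I * k * Real.sqrt ((c+t)^2+S) - 1) * ((c+t : ℝ) : ℂ) /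
        (4 * Real.pi * (Real.sqrt ((c+t)^2+S) : ℂ)^3))
      (Complex.exp (Complex.I * k * Real.sqrt (c^2+S)) *
        (Complex.I * k * (c:ℂ)^2 * (Complex.I * k * Real.sqrt (c^2+S) - 1) * Real.sqrt (c^2+S)
          + Complex.I * k * (c:ℂ)^2 * Real.sqrt (c^2+S)
          + (Complex.I * k * Real.sqrt (c^2+S) - 1) * (Real.sqrt (c^2+S) : ℂ)^2
          - 3 * (Complex.I * k * Real.sqrt (c^2+S) - 1) * (c:ℂ)^2)
        / (4 * Real.pi * (Real.sqrt (c^2+S) : ℂ)^5)) 0 := by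
  set r := Real.sqrt (c^2+S) with hrdef
  have hr : 0 < r := Real.sqrt_pos.2 hrpos
  have hq : HasDerivAt (fun t : ℝ => (c+t)^2 + S) (2*c) 0 := by
    have := (((hasDerivAt_id (0:ℝ)).const_add c).pow 2).add_const S
    simpa using this
  have hN : HasDerivAt (fun t : ℝ => Real.sqrt ((c+t)^2+S)) (c / r) 0 := by
    have h2 := hq.sqrt (by simpa using hrpos.ne')
    simp only [add_zero] at h2
    convert h2 using 1
    rw [hrdef]
    field_simp
  have hNC : HasDerivAt (fun t : ℝ => ((Real.sqrt ((c+t)^2+S) : ℝ) : ℂ)) ((c/r : ℝ) : ℂ) 0 :=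
    hN.ofReal_comp
  have hexp : HasDerivAt (fun t : ℝ => Complex.exp (Complex.I * k * (Real.sqrt ((c+t)^2+S) : ℝ)))
      (Complex.exp (Complex.I * k * r) * (Complex.I * k * ((c/r : ℝ) : ℂ))) 0 := by
    have := (hNC.const_mul (Complex.I * (k:ℂ))).cexp
    simpa [mul_assoc] using this
  have hlin : HasDerivAt (fun t : ℝ => Complex.I * k * (Real.sqrt ((c+t)^2+S) : ℝ) - 1)
      (Complex.I * k * ((c/r : ℝ) : ℂ)) 0 := by
    have := ((hNC.const_mul (Complex.I * (k:ℂ))).sub_const 1)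
    simpa [mul_assoc] using this
  have hc : HasDerivAt (fun t : ℝ => ((c+t : ℝ) : ℂ)) 1 0 := by
    have := ((hasDerivAt_id (0:ℝ)).const_add c).ofReal_comp
    simpa using this
  have hnum := (hexp.mul hlin).mul hc
  have hden : HasDerivAt (fun t : ℝ => (4 * (Real.pi:ℂ)) * ((Real.sqrt ((c+t)^2+S) : ℝ) : ℂ)^3)
      ((4 * (Real.pi:ℂ)) * (3 * ((r:ℝ):ℂ)^2 * ((c/r : ℝ) : ℂ))) 0 := by
    have h := (hNC.mul hNC).mul hNC
    have heq : (fun t : ℝ => ((((Real.sqrt ((c+t)^2+S) : ℝ):ℂ) * ((Real.sqrt ((c+t)^2+S):ℝ):ℂ)) * ((Real.sqrt ((c+t)^2+S):ℝ):ℂ)))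
        = (fun t : ℝ => (((Real.sqrt ((c+t)^2+S):ℝ):ℂ))^3) := by
      funext t; ring
    simp only [Pi.mul_def, add_zero] at h
    rw [heq] at h
    have h2 := h.const_mul (4 * (Real.pi:ℂ))
    refine h2.congr_deriv ?_
    rw [← hrdef]
    ring
  have hrc : ((r:ℝ):ℂ) ≠ 0 := Complex.ofReal_ne_zero.2 hr.ne'
  have hpic : ((Real.pi:ℝ):ℂ) ≠ 0 := Complex.ofReal_ne_zero.2 Real.pi_ne_zero
  have hden0 : (4 * (Real.pi:ℂ)) * ((r:ℝ):ℂ)^3 ≠ 0 :=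
    mul_ne_zero (mul_ne_zero (by norm_num) hpic) (pow_ne_zero _ hrc)
  have hdiv := hnum.div hden (by simpa using hden0)
  simp only [add_zero] at hdiv
  simp only [Pi.mul_apply, add_zero] at hdiv
  refine hdiv.congr_deriv ?_
  rw [← hrdef]
  push_cast
  field_simp

noncomputable def Fp (k : ℝ) (y : EuclideanSpace ℝ (Fin 3)) (i : Fin 3)
    (x : EuclideanSpace ℝ (Fin 3)) : ℂ :=
  Complex.exp (Complex.I * k * ‖x - y‖) * (Complex.I * k * ‖x - y‖ - 1) * ((x i - y i : ℝ) : ℂ)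
    / (4 * Real.pi * ((‖x - y‖ : ℝ) : ℂ)^3)

lemma hnorm_eq (x y : EuclideanSpace ℝ (Fin 3)) (i : Fin 3) :
    ‖x - y‖ = Real.sqrt ((x i - y i)^2 + Sxy x y i) := by
  have := norm_line x y i 0
  simpa using this

lemma hpos (x y : EuclideanSpace ℝ (Fin 3)) (i : Fin 3) (hxy : x ≠ y) :
    0 < (x i - y i)^2 + Sxy x y i := by
  have h1 : 0 < ‖x - y‖ := by simpa [sub_ne_zero] using hxy
  rw [hnorm_eq x y i] at h1
  exact Real.sqrt_pos.1 h1

lemma first_partial (k : ℝ) (x y : EuclideanSpace ℝ (Fin 3)) (i : Fin 3) (hxy : x ≠ y) :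
    pderiv3 i (fun x' => PhiK k x' y) x = Fp k y i x := by
  have hp := hpos x y i hxy
  unfold pderiv3
  have hfun : (fun t : ℝ => PhiK k (x + t • EuclideanSpace.single i (1:ℝ)) y)
      = fun t : ℝ => Complex.exp (Complex.I * k * Real.sqrt (((x i - y i)+t)^2 + Sxy x y i)) /
          (4 * Real.pi * Real.sqrt (((x i - y i)+t)^2 + Sxy x y i)) := by
    funext t
    rw [PhiK, norm_line]
  rw [hfun, (hasDeriv_g k _ _ hp).deriv]
  rw [Fp, hnorm_eq x y i]

lemma coord_line (x y : EuclideanSpace ℝ (Fin 3)) (i : Fin 3) (t : ℝ) :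
    (x + t • EuclideanSpace.single i (1:ℝ)) i - y i = x i - y i + t := by
  simp [EuclideanSpace.single_apply]
  ring

lemma second_partial (k : ℝ) (x y : EuclideanSpace ℝ (Fin 3)) (i : Fin 3) (hxy : x ≠ y) :
    pderiv3 i (pderiv3 i (fun x' => PhiK k x' y)) x =
      Complex.exp (Complex.I * k * ‖x - y‖) *
        (Complex.I * k * ((x i - y i : ℝ):ℂ)^2 * (Complex.I * k * ‖x - y‖ - 1) * ‖x - y‖
          + Complex.I * k * ((x i - y i : ℝ):ℂ)^2 * ‖x - y‖
          + (Complex.I * k * ‖x - y‖ - 1) * ((‖x - y‖:ℝ):ℂ)^2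
          - 3 * (Complex.I * k * ‖x - y‖ - 1) * ((x i - y i : ℝ):ℂ)^2)
        / (4 * Real.pi * ((‖x - y‖:ℝ):ℂ)^5) := by
  have hp := hpos x y i hxy
  have hstep : pderiv3 i (pderiv3 i (fun x' => PhiK k x' y)) x
      = deriv (fun t : ℝ => pderiv3 i (fun x' => PhiK k x' y)
          (x + t • EuclideanSpace.single i (1:ℝ))) 0 := rfl
  rw [hstep]
  have hcont : Continuous (fun t : ℝ => x + t • EuclideanSpace.single i (1:ℝ)) := by
    continuity
  have hev : ∀ᶠ t in nhds (0:ℝ), (x + t • EuclideanSpace.single i (1:ℝ)) ≠ y := by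
    have hopen : IsOpen {z : EuclideanSpace ℝ (Fin 3) | z ≠ y} := isOpen_compl_singleton
    have h0 : (0:ℝ) ∈ (fun t : ℝ => x + t • EuclideanSpace.single i (1:ℝ)) ⁻¹' {z | z ≠ y} := by
      simp only [Set.mem_preimage, Set.mem_setOf_eq, zero_smul, add_zero]
      exact hxy
    have hmem := (hopen.preimage hcont).mem_nhds h0
    filter_upwards [hmem] with t ht
    exact ht
  have heq : (fun t : ℝ => pderiv3 i (fun x' => PhiK k x' y)
        (x + t • EuclideanSpace.single i (1:ℝ)))
      =ᶠ[nhds (0:ℝ)] (fun t => Fp k y i (x + t • EuclideanSpace.single i (1:ℝ))) := by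
    filter_upwards [hev] with t ht
    exact first_partial k _ y i ht
  rw [heq.deriv_eq]
  have hfun : (fun t : ℝ => Fp k y i (x + t • EuclideanSpace.single i (1:ℝ)))
      = fun t : ℝ => Complex.exp (Complex.I * k * Real.sqrt (((x i - y i)+t)^2 + Sxy x y i)) *
          (Complex.I * k * Real.sqrt (((x i - y i)+t)^2 + Sxy x y i) - 1) *
          (((x i - y i)+t : ℝ):ℂ) /
          (4 * Real.pi * ((Real.sqrt (((x i - y i)+t)^2 + Sxy x y i) : ℝ):ℂ)^3) := by
    funext t
    rw [Fp, norm_line, coord_line]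
  rw [hfun, (hasDeriv_gd k _ _ hp).deriv, hnorm_eq x y i]


/-- The free-space Green's function `Φ_k(·, y)` satisfies the Helmholtz
equation `Δ_x Φ_k(x, y) + k² Φ_k(x, y) = 0` at every point `x ≠ y`. -/
theorem green_function_satisfies_helmholtz (k : ℝ) (y : EuclideanSpace ℝ (Fin 3)) :
    ∀ x : EuclideanSpace ℝ (Fin 3), x ≠ y →
      laplacian3 (fun x => PhiK k x y) x + (k : ℂ) ^ 2 * PhiK k x y = 0 := by
  intro x hxy
  have hr : 0 < ‖x - y‖ := by simpa [sub_ne_zero] using hxy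
  have hrne : ((‖x - y‖ : ℝ):ℂ) ≠ 0 := Complex.ofReal_ne_zero.2 hr.ne'
  have hpic : ((Real.pi : ℝ):ℂ) ≠ 0 := Complex.ofReal_ne_zero.2 Real.pi_ne_zero
  have hexpne : Complex.exp (Complex.I * k * ‖x - y‖) ≠ 0 := Complex.exp_ne_zero _
  have hreal : (x 0 - y 0)^2 + (x 1 - y 1)^2 + (x 2 - y 2)^2 = ‖x - y‖^2 := by
    rw [EuclideanSpace.norm_eq, Real.sq_sqrt (by positivity)]
    simp [Fin.sum_univ_three]
  have hsum : ((x 0 - y 0 : ℝ):ℂ)^2 + ((x 1 - y 1 : ℝ):ℂ)^2 + ((x 2 - y 2 : ℝ):ℂ)^2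
      = ((‖x - y‖ : ℝ):ℂ)^2 := by exact_mod_cast hreal
  have hc2 : ((x 2 - y 2 : ℝ):ℂ)^2
      = ((‖x - y‖ : ℝ):ℂ)^2 - ((x 0 - y 0 : ℝ):ℂ)^2 - ((x 1 - y 1 : ℝ):ℂ)^2 := by
    linear_combination hsum
  rw [laplacian3, Fin.sum_univ_three, second_partial k x y 0 hxy,
    second_partial k x y 1 hxy, second_partial k x y 2 hxy, PhiK, hc2]
  field_simp
  linear_combination (Complex.exp (Complex.I * k * ‖x - y‖) * ((‖x - y‖:ℝ):ℂ)^4 * (k:ℂ)^2) * Complex.I_sq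
end

section
/- Let k be a real number, y ∈ ℝ³ and x̂ ∈ ℝ³ a unit vector. Then lim_{r→∞} r · exp(−i k r) · Φ_k(r x̂, y) = (1/4π) · exp(−i k (x̂ · y)), where Φ_k(x, y) = exp(i k |x − y|)/(4π |x − y|). -/
open Filter
open scoped RealInnerProductSpace

set_option maxHeartbeats 800000 in
/-- The far field of the free-space Green's function:
`lim_{r→∞} r e^{−ikr} Φ_k(r x̂, y) = e^{−ik x̂·y}/(4π)` for a unit vector `x̂`. -/
theorem green_function_far_field (k : ℝ) (y : EuclideanSpace ℝ (Fin 3))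
    (xhat : EuclideanSpace ℝ (Fin 3)) (hxhat : ‖xhat‖ = 1) :
    Tendsto (fun r : ℝ => (r : ℂ) * Complex.exp (-(Complex.I * k * r)) * PhiK k (r • xhat) y)
      atTop (nhds ((1 / (4 * Real.pi) : ℂ) * Complex.exp (-(Complex.I * k * ⟪xhat, y⟫)))) := by
  set a : ℝ := ⟪xhat, y⟫ with ha
  set d : ℝ → ℝ := fun r => ‖r • xhat - y‖ with hdd
  have hdsq : ∀ r : ℝ, 0 ≤ r → d r ^ 2 = r ^ 2 - 2 * r * a + ‖y‖ ^ 2 := by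
    intro r hr
    have h0 : d r ^ 2 = ‖r • xhat‖ ^ 2 - 2 * ⟪r • xhat, y⟫ + ‖y‖ ^ 2 := norm_sub_sq_real _ _
    rw [h0, norm_smul, real_inner_smul_left, hxhat, Real.norm_eq_abs, abs_of_nonneg hr, ← ha]
    ring
  have hdpos : ∀ᶠ r : ℝ in atTop, 0 < r ∧ ‖y‖ < r := by
    filter_upwards [eventually_gt_atTop (0 : ℝ), eventually_gt_atTop ‖y‖] with r h1 h2
    exact ⟨h1, h2⟩
  have hdge : ∀ r : ℝ, 0 ≤ r → r - ‖y‖ ≤ d r := by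
    intro r hr
    have h := norm_sub_norm_le (r • xhat) y
    rwa [norm_smul, hxhat, Real.norm_eq_abs, abs_of_nonneg hr, mul_one] at h
  -- d r / r → 1
  have h1 : Tendsto (fun r => d r / r) atTop (nhds 1) := by
    have hin : Tendsto (fun r : ℝ => 1 - 2 * a / r + ‖y‖ ^ 2 / r ^ 2) atTop (nhds 1) := by
      have t1 : Tendsto (fun r : ℝ => 2 * a / r) atTop (nhds 0) :=
        Tendsto.div_atTop tendsto_const_nhds tendsto_id
      have t2 : Tendsto (fun r : ℝ => ‖y‖ ^ 2 / r ^ 2) atTop (nhds 0) :=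
        Tendsto.div_atTop tendsto_const_nhds (tendsto_pow_atTop (by norm_num))
      have := ((tendsto_const_nhds (x := (1:ℝ)) (f := atTop)).sub t1).add t2
      simpa using this
    have hs : Tendsto (fun r : ℝ => Real.sqrt (1 - 2 * a / r + ‖y‖ ^ 2 / r ^ 2))
        atTop (nhds 1) := by
      have := (Real.continuous_sqrt.tendsto 1).comp hin
      simpa [Function.comp_def] using this
    apply hs.congr'
    filter_upwards [hdpos] with r hh
    obtain ⟨hr, _⟩ := hh
    have hnn : (0:ℝ) ≤ r ^ 2 - 2 * r * a + ‖y‖ ^ 2 := by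
      rw [← hdsq r hr.le]; positivity
    have hsq : d r = Real.sqrt (r ^ 2 - 2 * r * a + ‖y‖ ^ 2) := by
      rw [← hdsq r hr.le, Real.sqrt_sq (norm_nonneg _)]
    have hne : r ≠ 0 := hr.ne'
    rw [show (1 - 2 * a / r + ‖y‖ ^ 2 / r ^ 2) = (r ^ 2 - 2 * r * a + ‖y‖ ^ 2) / r ^ 2 by
      field_simp]
    rw [Real.sqrt_div hnn, Real.sqrt_sq hr.le, hsq]
  -- d r - r → -a
  have h2 : Tendsto (fun r => d r - r) atTop (nhds (-a)) := by
    have hq : Tendsto (fun r : ℝ => (‖y‖ ^ 2 / r - 2 * a) / (d r / r + 1))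
        atTop (nhds (-a)) := by
      have t2 : Tendsto (fun r : ℝ => ‖y‖ ^ 2 / r - 2 * a) atTop (nhds (0 - 2 * a)) :=
        (Tendsto.div_atTop tendsto_const_nhds tendsto_id).sub tendsto_const_nhds
      have t3 : Tendsto (fun r : ℝ => d r / r + 1) atTop (nhds 2) := by
        have := h1.add (tendsto_const_nhds (x := (1:ℝ)) (f := atTop))
        norm_num at this; exact this
      have := t2.div t3 (by norm_num)
      rw [show -a = (0 - 2 * a) / 2 by ring]
      exact this
    apply hq.congr'
    filter_upwards [hdpos] with r hh
    obtain ⟨hr, hry⟩ := hh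
    have hd0 : 0 < d r := lt_of_lt_of_le (by linarith) (hdge r hr.le)
    have hne : r ≠ 0 := hr.ne'
    have key : (d r - r) * (d r + r) = ‖y‖ ^ 2 - 2 * r * a := by
      have := hdsq r hr.le
      nlinarith [this]
    have hdr : d r + r ≠ 0 := by positivity
    field_simp
    nlinarith [key]
  -- combine
  have hrd : Tendsto (fun r => (r / d r : ℝ)) atTop (nhds 1) := by
    have := h1.inv₀ one_ne_zero
    rw [inv_one] at this
    exact this.congr fun r => by rw [inv_div]
  have hexp : Tendsto (fun r : ℝ => Complex.exp (Complex.I * k * ((d r - r : ℝ) : ℂ)))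
      atTop (nhds (Complex.exp (-(Complex.I * k * a)))) := by
    have hc : Continuous fun t : ℝ => Complex.exp (Complex.I * k * (t : ℂ)) := by
      continuity
    have h3 := (hc.tendsto (-a)).comp h2
    simp only [Function.comp_def] at h3
    convert h3 using 2
    push_cast
    ring
  have hF : Tendsto (fun r : ℝ =>
      ((1 : ℂ) / (4 * Real.pi)) * ((r / d r : ℝ) : ℂ) *
        Complex.exp (Complex.I * k * ((d r - r : ℝ) : ℂ)))
      atTop (nhds ((1 / (4 * Real.pi) : ℂ) * Complex.exp (-(Complex.I * k * a)))) := by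
    have hcast : Tendsto (fun r : ℝ => ((r / d r : ℝ) : ℂ)) atTop (nhds (1 : ℂ)) := by
      have h4 := (Complex.continuous_ofReal.tendsto 1).comp hrd
      simp only [Function.comp_def] at h4
      exact_mod_cast h4
    have := (tendsto_const_nhds (x := ((1:ℂ) / (4 * Real.pi))) (f := atTop)).mul hcast |>.mul hexp
    simpa using this
  apply hF.congr'
  filter_upwards [hdpos] with r hh
  obtain ⟨hr, hry⟩ := hh
  have hd0 : 0 < d r := lt_of_lt_of_le (by linarith) (hdge r hr.le)
  have hdC : (d r : ℂ) ≠ 0 := by exact_mod_cast hd0.ne'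
  have hpi : (Real.pi : ℂ) ≠ 0 := by exact_mod_cast Real.pi_ne_zero
  show ((1 : ℂ) / (4 * Real.pi)) * ((r / d r : ℝ) : ℂ) *
        Complex.exp (Complex.I * k * ((d r - r : ℝ) : ℂ))
      = (r : ℂ) * Complex.exp (-(Complex.I * k * r)) * PhiK k (r • xhat) y
  rw [PhiK]
  have hdc : (‖r • xhat - y‖ : ℂ) = (d r : ℂ) := by norm_cast
  rw [hdc]
  push_cast
  rw [show Complex.I * k * ((d r : ℂ) - r) = Complex.I * k * (d r : ℂ) + -(Complex.I * k * r) by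
    ring, Complex.exp_add]
  field_simp
end

section
/- Let k be a real number, N a positive integer, C₁,…,C_N complex coefficients, y₁,…,y_N ∈ ℝ³, and x̂ ∈ ℝ³ a unit vector. For the manufactured solution p(x) = Σ_{n=1}^N C_n Φ_k(x, y_n) with Φ_k(x, y) = exp(i k |x − y|)/(4π |x − y|), the far field is p₀(x̂) = lim_{r→∞} r · exp(−i k r) · p(r x̂) = (1/4π) Σ_{n=1}^N C_n exp(−i k (x̂ · y_n)). -/
open Filter
open scoped RealInnerProductSpace

private theorem farfield_aux0 (xhat yv : EuclideanSpace ℝ (Fin 3)) (hxhat : ‖xhat‖ = 1) :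
    Tendsto (fun r : ℝ => ‖r • xhat - yv‖ / r) atTop (nhds 1) := by
  have h : Tendsto (fun r : ℝ => ‖xhat - r⁻¹ • yv‖) atTop (nhds 1) := by
    have h0 : Tendsto (fun r : ℝ => xhat - r⁻¹ • yv) atTop (nhds xhat) := by
      have := tendsto_inv_atTop_zero (𝕜 := ℝ)
      have h1 : Tendsto (fun r : ℝ => r⁻¹ • yv) atTop (nhds 0) := by
        simpa using this.smul_const yv
      simpa using tendsto_const_nhds.sub h1
    simpa [hxhat, Function.comp_def] using (continuous_norm.tendsto xhat).comp h0
  refine h.congr' ?_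
  filter_upwards [eventually_gt_atTop 0] with r hr
  rw [eq_comm, div_eq_iff (ne_of_gt hr)]
  have : r • xhat - yv = r • (xhat - r⁻¹ • yv) := by
    rw [smul_sub, smul_inv_smul₀ (ne_of_gt hr)]
  rw [this, norm_smul, Real.norm_of_nonneg hr.le, mul_comm]

private theorem farfield_aux1 (xhat yv : EuclideanSpace ℝ (Fin 3)) (hxhat : ‖xhat‖ = 1) :
    Tendsto (fun r : ℝ => ‖r • xhat - yv‖ - r) atTop (nhds (-⟪xhat, yv⟫)) := by
  set a := ⟪xhat, yv⟫ with ha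
  set b := ‖yv‖ ^ 2 with hb
  have main : Tendsto (fun r : ℝ => (b / r - 2 * a) / (‖r • xhat - yv‖ / r + 1))
      atTop (nhds ((0 - 2 * a) / (1 + 1))) := by
    refine Tendsto.div ?_ ?_ (by norm_num)
    · exact (tendsto_const_nhds.div_atTop tendsto_id).sub tendsto_const_nhds
    · exact (farfield_aux0 xhat yv hxhat).add tendsto_const_nhds
  have hval : (0 - 2 * a) / (1 + 1) = -a := by ring
  rw [hval] at main
  refine main.congr' ?_
  filter_upwards [eventually_gt_atTop 0] with r hr
  set f := ‖r • xhat - yv‖ with hf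
  have hfsq : f ^ 2 = r ^ 2 - 2 * a * r + b := by
    rw [hf, hb, ha, norm_sub_sq_real, real_inner_smul_left, norm_smul, hxhat,
      Real.norm_eq_abs, mul_one, sq_abs]
    ring
  have hfr : 0 < f + r := by positivity
  have key : (f - r) * (f + r) = b - 2 * a * r := by
    have : (f - r) * (f + r) = f ^ 2 - r ^ 2 := by ring
    rw [this, hfsq]; ring
  rw [eq_comm]
  field_simp
  linarith [key]

/-- The far field of the manufactured solution `p(x) = Σₙ Cₙ Φ_k(x, yₙ)` is
`p₀(x̂) = lim_{r→∞} r e^{−ikr} p(r x̂) = (1/4π) Σₙ Cₙ e^{−ik x̂·yₙ}`. -/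
theorem manufactured_solution_far_field (k : ℝ) (N : ℕ) (hN : 0 < N)
    (C : Fin N → ℂ) (y : Fin N → EuclideanSpace ℝ (Fin 3))
    (p : EuclideanSpace ℝ (Fin 3) → ℂ)
    (hp : ∀ x : EuclideanSpace ℝ (Fin 3), p x = ∑ n : Fin N, C n * PhiK k x (y n))
    (xhat : EuclideanSpace ℝ (Fin 3)) (hxhat : ‖xhat‖ = 1) :
    Tendsto (fun r : ℝ => (r : ℂ) * Complex.exp (-(Complex.I * k * r)) * p (r • xhat))
      atTop
      (nhds ((1 / (4 * Real.pi) : ℂ) *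
        ∑ n : Fin N, C n * Complex.exp (-(Complex.I * k * ⟪xhat, y n⟫)))) := by
  have hrw : ∀ r : ℝ, (r : ℂ) * Complex.exp (-(Complex.I * k * r)) * p (r • xhat)
      = ∑ n : Fin N, (r : ℂ) * Complex.exp (-(Complex.I * k * r)) *
          (C n * PhiK k (r • xhat) (y n)) := by
    intro r
    rw [hp, Finset.mul_sum]
  simp only [hrw]
  rw [Finset.mul_sum]
  refine tendsto_finset_sum _ fun n _ => ?_
  set yv := y n with hyv
  -- per-term limit
  have hphase : Tendsto (fun r : ℝ => ((‖r • xhat - yv‖ - r : ℝ) : ℂ)) atTop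
      (nhds ((-⟪xhat, yv⟫ : ℝ) : ℂ)) :=
    (Complex.continuous_ofReal.tendsto _).comp (farfield_aux1 xhat yv hxhat)
  have hexp : Tendsto (fun r : ℝ =>
      Complex.exp (Complex.I * k * ((‖r • xhat - yv‖ - r : ℝ) : ℂ))) atTop
      (nhds (Complex.exp (Complex.I * k * ((-⟪xhat, yv⟫ : ℝ) : ℂ)))) := by
    exact (Complex.continuous_exp.tendsto _).comp (tendsto_const_nhds.mul hphase)
  have hratio : Tendsto (fun r : ℝ => ((r / ‖r • xhat - yv‖ : ℝ) : ℂ)) atTop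
      (nhds (1 : ℂ)) := by
    have h := (farfield_aux0 xhat yv hxhat).inv₀ one_ne_zero
    have h' : Tendsto (fun r : ℝ => r / ‖r • xhat - yv‖) atTop (nhds 1) := by
      have heq : ∀ᶠ r : ℝ in atTop, (‖r • xhat - yv‖ / r)⁻¹ = r / ‖r • xhat - yv‖ := by
        filter_upwards [eventually_gt_atTop 0] with r hr
        rw [inv_div]
      simpa using h.congr' heq
    simpa [Function.comp_def] using (Complex.continuous_ofReal.tendsto _).comp h'
  have hlim : Tendsto (fun r : ℝ =>
      C n * Complex.exp (Complex.I * k * ((‖r • xhat - yv‖ - r : ℝ) : ℂ)) *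
        ((r / ‖r • xhat - yv‖ : ℝ) : ℂ) / (4 * Real.pi)) atTop
      (nhds (C n * Complex.exp (Complex.I * k * ((-⟪xhat, yv⟫ : ℝ) : ℂ)) * 1 /
        (4 * Real.pi))) :=
    ((tendsto_const_nhds.mul hexp).mul hratio).div_const _
  have hval : C n * Complex.exp (Complex.I * k * ((-⟪xhat, yv⟫ : ℝ) : ℂ)) * 1 /
      (4 * Real.pi)
      = 1 / (4 * (Real.pi : ℂ)) * (C n * Complex.exp (-(Complex.I * k * ⟪xhat, yv⟫))) := by
    push_cast
    rw [mul_one]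
    ring_nf
  rw [hval] at hlim
  refine hlim.congr' ?_
  filter_upwards [eventually_gt_atTop (‖yv‖)] with r hr
  have hrpos : 0 < r := lt_of_le_of_lt (norm_nonneg _) hr
  have hfpos : 0 < ‖r • xhat - yv‖ := by
    have : r - ‖yv‖ ≤ ‖r • xhat - yv‖ := by
      calc r - ‖yv‖ = ‖r • xhat‖ - ‖yv‖ := by
            rw [norm_smul, Real.norm_of_nonneg hrpos.le, hxhat, mul_one]
        _ ≤ ‖r • xhat - yv‖ := norm_sub_norm_le _ _
    linarith
  have hfne : ((‖r • xhat - yv‖ : ℝ) : ℂ) ≠ 0 := by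
    exact_mod_cast ne_of_gt hfpos
  have hpine : ((Real.pi : ℝ) : ℂ) ≠ 0 := by exact_mod_cast Real.pi_ne_zero
  rw [PhiK]
  rw [eq_comm]
  push_cast
  rw [mul_sub, Complex.exp_sub]
  rw [show -(Complex.I * (k : ℂ) * (r : ℂ)) = -((r : ℂ) * Complex.I * (k : ℂ)) by ring]
  field_simp
  have hee : Complex.exp (-((r : ℂ) * Complex.I * (k : ℂ))) *
      Complex.exp ((r : ℂ) * Complex.I * (k : ℂ)) = 1 := by
    rw [← Complex.exp_add]; simp
  linear_combination ((r : ℂ) * C n) * hee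
end
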